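/- arXiv:2301.09130 — 5 statements merged into one kernel-verified Lean document; each statement's English description precedes it below -/
import Mathlib

section
/- Let μ ∈ ℝ and v ≥ 0. Then ∫ sin x d(gaussianReal μ v)(x) = exp(−v/2) · sin μ. -/
open MeasureTheory ProbabilityTheory Real NNReal Complex

lemma integral_sin_mul_eq_im_charFun {μ : Measure ℝ} [IsFiniteMeasure μ] (t : ℝ) :
    ∫ x, Real.sin (t * x) ∂μ = (charFun μ t).im := by
  have hint : Integrable (fun x : ℝ ↦ cexp (t * x * I)) μ :=
    (integrable_const (1 : ℝ)).mono' (by fun_prop) (.of_forall fun x ↦ by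
      rw [← ofReal_mul, norm_exp_ofReal_mul_I])
  calc ∫ x, Real.sin (t * x) ∂μ = ∫ x, (cexp (t * x * I)).im ∂μ := by
        simp_rw [← ofReal_mul, exp_ofReal_mul_I_im]
    _ = (charFun μ t).im := by rw [charFun_apply_real]; exact integral_im hint

theorem gaussian_integral_sin (μ : ℝ) (v : ℝ≥0) :
    ∫ x, Real.sin x ∂(gaussianReal μ v) = Real.exp (-(v : ℝ) / 2) * Real.sin μ := by
  simpa [charFun_gaussianReal, exp_im, ← ofReal_ofNat, ← ofReal_div, neg_div] using
    integral_sin_mul_eq_im_charFun (μ := gaussianReal μ v) 1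
end

section
/- Let μ ∈ ℝ and v ≥ 0. Then ∫ x · cos x d(gaussianReal μ v)(x) = exp(−v/2) · (μ · cos μ − v · sin μ). -/
open MeasureTheory ProbabilityTheory Real NNReal

/-! `x cos x` is the real part of `x exp (i x)`, whose Gaussian integral is the derivative at
`z = i` of the complex moment-generating function `z ↦ exp (z μ + v z² / 2)`, namely
`(μ + i v) exp (i μ - v / 2)`. -/

open Complex in
lemma integral_mul_cexp_mul_gaussianReal (μ : ℝ) (v : ℝ≥0) (z : ℂ) :
    ∫ x, x * cexp (z * x) ∂gaussianReal μ v =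
      (μ + v * z) * cexp (z * μ + v * z ^ 2 / 2) := by
  have hmgf : complexMGF id (gaussianReal μ v) = fun z ↦ cexp (z * μ + v * z ^ 2 / 2) :=
    funext complexMGF_id_gaussianReal
  have hderiv := hasDerivAt_complexMGF (X := id) (μ := gaussianReal μ v) (z := z) (by simp)
  rw [hmgf] at hderiv
  have hexponent : HasDerivAt (fun z : ℂ ↦ z * μ + v * z ^ 2 / 2) (μ + v * z) z := by
    refine (((hasDerivAt_id' z).mul_const (μ : ℂ)).add
      (((hasDerivAt_pow 2 z).const_mul (v : ℂ)).div_const 2)).congr_deriv ?_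
    ring
  exact hderiv.unique (by simpa [mul_comm] using hexponent.cexp)

open Complex in
lemma re_ofReal_mul_cexp_I_mul (x : ℝ) : ((x : ℂ) * cexp (I * x)).re = x * Real.cos x := by
  rw [mul_comm I, exp_mul_I, ← ofReal_cos, ← ofReal_sin]
  simp only [mul_re, add_re, ofReal_re, ofReal_im, I_re, I_im]
  ring

theorem gaussian_integral_id_mul_cos (μ : ℝ) (v : ℝ≥0) :
    ∫ x, x * Real.cos x ∂(gaussianReal μ v) =
      Real.exp (-(v : ℝ) / 2) * (μ * Real.cos μ - (v : ℝ) * Real.sin μ) := by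
  have hint :
      Integrable (fun x : ℝ ↦ (x : ℂ) * Complex.exp (Complex.I * x)) (gaussianReal μ v) := by
    simpa using integrable_pow_mul_cexp_of_re_mem_interior_integrableExpSet
      (X := id) (μ := gaussianReal μ v) (z := Complex.I) (by simp) 1
  have hexponent :
      Complex.I * μ + v * Complex.I ^ 2 / 2 = ((-(v : ℝ) / 2 : ℝ) : ℂ) + μ * Complex.I := by
    push_cast
    linear_combination (v / 2 : ℂ) * Complex.I_sq
  calc ∫ x, x * Real.cos x ∂(gaussianReal μ v)
      = (∫ x, (x : ℂ) * Complex.exp (Complex.I * x) ∂(gaussianReal μ v)).re := by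
        simp_rw [← re_ofReal_mul_cexp_I_mul]
        exact integral_re hint
    _ = ((μ + v * Complex.I) *
        (Real.exp (-(v : ℝ) / 2) * (Real.cos μ + Real.sin μ * Complex.I))).re := by
        rw [integral_mul_cexp_mul_gaussianReal, hexponent, Complex.exp_add, Complex.exp_mul_I,
          Complex.ofReal_exp, Complex.ofReal_cos, Complex.ofReal_sin]
    _ = Real.exp (-(v : ℝ) / 2) * (μ * Real.cos μ - (v : ℝ) * Real.sin μ) := by
        simp only [Complex.mul_re, Complex.mul_im, Complex.add_re, Complex.add_im,
          Complex.ofReal_re, Complex.ofReal_im, Complex.I_re, Complex.I_im]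
        ring
end

section
/- Let μ ∈ ℝ and v ≥ 0. Then ∫ x · sin x d(gaussianReal μ v)(x) = exp(−v/2) · (μ · sin μ + v · cos μ). -/
/-! The integral is the imaginary part of `∫ x e^{ix}`, which is the derivative at `z = i` of the
complex moment generating function `z ↦ exp (z μ + v z² / 2)` of `gaussianReal μ v`. -/

open MeasureTheory ProbabilityTheory Real NNReal

namespace ProbabilityTheory

lemma hasDerivAt_cexp_gaussian_exponent (μ : ℝ) (v : ℝ≥0) (z : ℂ) :
    HasDerivAt (fun w : ℂ ↦ Complex.exp (w * μ + v * w ^ 2 / 2))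
      ((μ + v * z) * Complex.exp (z * μ + v * z ^ 2 / 2)) z := by
  have h : HasDerivAt (fun w : ℂ ↦ w * μ + v * w ^ 2 / 2) (μ + v * z) z := by
    refine (((hasDerivAt_id' z).mul_const (μ : ℂ)).add
      (((hasDerivAt_pow 2 z).const_mul (v : ℂ)).div_const 2)).congr_deriv ?_
    push_cast; ring
  simpa [mul_comm] using h.cexp

lemma re_mem_interior_integrableExpSet_id_gaussianReal (μ : ℝ) (v : ℝ≥0) (z : ℂ) :
    z.re ∈ interior (integrableExpSet id (gaussianReal μ v)) := by
  simp [integrableExpSet_id_gaussianReal]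

lemma integrable_id_mul_cexp_gaussianReal (μ : ℝ) (v : ℝ≥0) (z : ℂ) :
    Integrable (fun x : ℝ ↦ x * Complex.exp (z * x)) (gaussianReal μ v) := by
  simpa using integrable_pow_mul_cexp_of_re_mem_interior_integrableExpSet
    (re_mem_interior_integrableExpSet_id_gaussianReal μ v z) 1

lemma integral_id_mul_cexp_gaussianReal (μ : ℝ) (v : ℝ≥0) (z : ℂ) :
    ∫ x, x * Complex.exp (z * x) ∂gaussianReal μ v =
      (μ + v * z) * Complex.exp (z * μ + v * z ^ 2 / 2) := by
  have hmgf := hasDerivAt_complexMGF (re_mem_interior_integrableExpSet_id_gaussianReal μ v z)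
  rw [funext complexMGF_id_gaussianReal] at hmgf
  simpa using hmgf.unique (hasDerivAt_cexp_gaussian_exponent μ v z)

end ProbabilityTheory

theorem gaussian_integral_id_mul_sin (μ : ℝ) (v : ℝ≥0) :
    ∫ x, x * Real.sin x ∂(gaussianReal μ v) =
      Real.exp (-(v : ℝ) / 2) * (μ * Real.sin μ + (v : ℝ) * Real.cos μ) := by
  have hexponent :
      Complex.I * μ + v * Complex.I ^ 2 / 2 = ((-(v : ℝ) / 2 : ℝ) : ℂ) + μ * Complex.I := by
    push_cast
    rw [Complex.I_sq]
    ring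
  calc ∫ x, x * Real.sin x ∂(gaussianReal μ v)
      = ∫ x, (x * Complex.exp (Complex.I * x)).im ∂(gaussianReal μ v) := by
        simp [mul_comm Complex.I, Complex.exp_ofReal_mul_I_im]
    _ = (∫ x, x * Complex.exp (Complex.I * x) ∂(gaussianReal μ v)).im :=
        integral_im (integrable_id_mul_cexp_gaussianReal μ v Complex.I)
    _ = Real.exp (-(v : ℝ) / 2) * (μ * Real.sin μ + (v : ℝ) * Real.cos μ) := by
        rw [integral_id_mul_cexp_gaussianReal, hexponent, Complex.exp_add, ← Complex.ofReal_exp,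
          Complex.exp_mul_I, ← Complex.ofReal_cos, ← Complex.ofReal_sin]
        simp only [Complex.mul_im, Complex.mul_re, Complex.add_re, Complex.add_im,
          Complex.ofReal_re, Complex.ofReal_im, Complex.I_re, Complex.I_im]
        ring
end

section
/- Let μ ∈ ℝ and v ≥ 0. Then ∫ x² · cos x d(gaussianReal μ v)(x) = exp(−v/2) · ((μ² + v − v²) · cos μ − 2 μ v · sin μ). -/
/-!
`x² cos x` is the real part of `x² e^{ix}`, and `∫ x² e^{zx} dN(μ, v)` is the second derivative
of the complex moment generating function `z ↦ exp (μ z + v z² / 2)`, namely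
`((μ + v z)² + v) exp (μ z + v z² / 2)`. Evaluating at `z = i` and taking real parts gives the
formula. The moment generating function formula also covers the Dirac case `v = 0`.
-/

open MeasureTheory ProbabilityTheory Real NNReal Complex

lemma iteratedDeriv_two_cexp_quadratic (a b z : ℂ) :
    iteratedDeriv 2 (fun w ↦ cexp (w * a + b * w ^ 2 / 2)) z =
      ((a + b * z) ^ 2 + b) * cexp (z * a + b * z ^ 2 / 2) := by
  have h1 (w : ℂ) : HasDerivAt (fun w ↦ cexp (w * a + b * w ^ 2 / 2))
      ((a + b * w) * cexp (w * a + b * w ^ 2 / 2)) w := by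
    have hq : HasDerivAt (fun w ↦ w * a + b * w ^ 2 / 2) (a + b * w) w :=
      (((hasDerivAt_id' w).mul_const a).add
        (((hasDerivAt_pow 2 w).const_mul b).div_const 2)).congr_deriv (by ring)
    exact hq.cexp.congr_deriv (mul_comm _ _)
  have h2 : HasDerivAt (fun w ↦ (a + b * w) * cexp (w * a + b * w ^ 2 / 2))
      (((a + b * z) ^ 2 + b) * cexp (z * a + b * z ^ 2 / 2)) z :=
    ((((hasDerivAt_id' z).const_mul b).const_add a).mul (h1 z)).congr_deriv (by ring)
  rw [iteratedDeriv_succ, iteratedDeriv_one, funext fun w ↦ (h1 w).deriv, h2.deriv]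

lemma integral_sq_mul_cexp_gaussianReal (μ : ℝ) (v : ℝ≥0) (z : ℂ) :
    ∫ x, (x : ℂ) ^ 2 * cexp (z * x) ∂gaussianReal μ v =
      ((μ + v * z) ^ 2 + v) * cexp (z * μ + v * z ^ 2 / 2) := by
  have hz : z.re ∈ interior (integrableExpSet id (gaussianReal μ v)) := by simp
  have h := iteratedDeriv_complexMGF hz 2
  rw [funext complexMGF_id_gaussianReal, iteratedDeriv_two_cexp_quadratic] at h
  simpa using h.symm

lemma integral_sq_mul_cos_gaussianReal_eq_re (μ : ℝ) (v : ℝ≥0) :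
    ∫ x, x ^ 2 * Real.cos x ∂gaussianReal μ v =
      (((μ + v * I) ^ 2 + v) * cexp (I * μ + v * I ^ 2 / 2)).re := by
  have hint : Integrable (fun x : ℝ ↦ (x : ℂ) ^ 2 * cexp (I * x)) (gaussianReal μ v) :=
    integrable_pow_mul_cexp_of_re_mem_interior_integrableExpSet (X := id) (by simp) 2
  rw [← integral_sq_mul_cexp_gaussianReal, ← RCLike.re_to_complex, ← integral_re hint]
  congr with x
  rw [mul_comm I, exp_mul_I, ← ofReal_cos, ← ofReal_sin, ← ofReal_pow]
  simp only [RCLike.re_to_complex, mul_re, add_re, ofReal_re, ofReal_im, I_re, I_im]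
  ring

theorem gaussian_integral_sq_mul_cos (μ : ℝ) (v : ℝ≥0) :
    ∫ x, x ^ 2 * Real.cos x ∂(gaussianReal μ v) =
      Real.exp (-(v : ℝ) / 2) *
        ((μ ^ 2 + (v : ℝ) - (v : ℝ) ^ 2) * Real.cos μ - 2 * μ * (v : ℝ) * Real.sin μ) := by
  have hexponent : I * μ + v * I ^ 2 / 2 = (-(v : ℝ) / 2 : ℝ) + μ * I := by
    push_cast
    linear_combination (v / 2 : ℂ) * I_sq
  rw [integral_sq_mul_cos_gaussianReal_eq_re, hexponent, Complex.exp_add, exp_mul_I,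
    ← ofReal_exp, ← ofReal_cos, ← ofReal_sin]
  simp only [mul_re, add_re, mul_im, add_im, ofReal_re, ofReal_im, I_re, I_im, pow_two]
  ring
end

section
/- Let μ_x, μ_θ, ρ ∈ ℝ and σ_x², σ_θ² > 0 with σ_x² σ_θ² − ρ² > 0, and let p(x, θ) = (2π √(σ_x² σ_θ² − ρ²))^{−1} exp(−½ (x − μ_x, θ − μ_θ) Σ^{−1} (x − μ_x, θ − μ_θ)ᵀ) be the joint Gaussian density on ℝ² with covariance matrix Σ = [[σ_x², ρ], [ρ, σ_θ²]]. Then ∫∫_{ℝ²} x · cos θ · p(x, θ) dx dθ = exp(−σ_θ²/2) · (μ_x · cos μ_θ − ρ · sin μ_θ). -/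
/-!
Completing the square in `x` (a Schur complement) factors the density as the `N(mθ, sθ)` density
of `θ` times the `N(mx + ρ / sθ * (θ - mθ), (sx * sθ - ρ ^ 2) / sθ)` density of `x`. Integrating
out `x` leaves the conditional mean, so it remains to compute `E[(a + b (θ - mθ)) cos θ]` for a
Gaussian `θ`: this is the real part of `E[(a + b (θ - mθ)) e^{iθ}]`, which the Gaussian complex
moment generating function `E[e^{zθ}] = e^{z mθ + sθ z² / 2}` and its derivative give at `z = i`.
-/

open MeasureTheory Real Matrix ProbabilityTheory NNReal

namespace ProbabilityTheory

variable {μ : ℝ} {v : ℝ≥0}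

lemma integral_mul_cexp_gaussianReal (z : ℂ) :
    ∫ x, x * Complex.exp (z * x) ∂gaussianReal μ v
      = (μ + v * z) * Complex.exp (z * μ + v * z ^ 2 / 2) := by
  have hexponent : HasDerivAt (fun z : ℂ ↦ z * μ + v * z ^ 2 / 2) (μ + v * z) z :=
    (((hasDerivAt_id' z).mul_const (μ : ℂ)).fun_add
      (((hasDerivAt_pow 2 z).const_mul (v : ℂ)).div_const 2)).congr_deriv (by ring)
  have hclosedForm := hexponent.cexp
  rw [mul_comm] at hclosedForm
  have hderiv := hasDerivAt_complexMGF (X := id) (μ := gaussianReal μ v) (z := z) (by simp)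
  rw [funext (complexMGF_id_gaussianReal (μ := μ) (v := v))] at hderiv
  exact hderiv.unique hclosedForm

lemma integrable_cexp_mul_gaussianReal (z : ℂ) :
    Integrable (fun x : ℝ ↦ Complex.exp (z * x)) (gaussianReal μ v) :=
  integrable_cexp_mul_of_re_mem_interior_integrableExpSet (X := id) (by simp)

lemma integrable_mul_cexp_gaussianReal (z : ℂ) :
    Integrable (fun x : ℝ ↦ x * Complex.exp (z * x)) (gaussianReal μ v) := by
  simpa using integrable_pow_mul_cexp_of_re_mem_interior_integrableExpSet (X := id) (z := z)
    (by simp) 1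

lemma integral_affine_mul_cexp_gaussianReal (c b z : ℂ) :
    ∫ x, (c + b * x) * Complex.exp (z * x) ∂gaussianReal μ v
      = (c + b * (μ + v * z)) * Complex.exp (z * μ + v * z ^ 2 / 2) := by
  have hmgf := complexMGF_id_gaussianReal (μ := μ) (v := v) z
  simp only [complexMGF, id] at hmgf
  simp only [add_mul, mul_assoc]
  rw [integral_add ((integrable_cexp_mul_gaussianReal z).const_mul _)
    ((integrable_mul_cexp_gaussianReal z).const_mul _), integral_const_mul, integral_const_mul,
    integral_mul_cexp_gaussianReal, hmgf]
  ring

lemma integral_affine_mul_cos_gaussianReal (a b : ℝ) :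
    ∫ x, (a + b * (x - μ)) * Real.cos x ∂gaussianReal μ v
      = Real.exp (-v / 2) * (a * Real.cos μ - b * v * Real.sin μ) := by
  have hpoint (x : ℝ) : (a + b * (x - μ)) * Real.cos x
      = (((a - b * μ : ℝ) + b * x : ℂ) * Complex.exp (Complex.I * x)).re := by
    rw [show ((a - b * μ : ℝ) + b * x : ℂ) = ((a + b * (x - μ) : ℝ) : ℂ) by push_cast; ring,
      Complex.re_ofReal_mul, mul_comm Complex.I, Complex.exp_ofReal_mul_I_re]
  have hvalue : Complex.exp (Complex.I * μ + v * Complex.I ^ 2 / 2)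
      = Real.exp (-v / 2) * (Real.cos μ + Real.sin μ * Complex.I) := by
    rw [Complex.I_sq, mul_neg_one, neg_div, add_comm, Complex.exp_add, mul_comm Complex.I,
      Complex.exp_mul_I]
    push_cast
    ring_nf
  have hintegrable : Integrable
      (fun x : ℝ ↦ ((a - b * μ : ℝ) + b * x : ℂ) * Complex.exp (Complex.I * x)) (gaussianReal μ v) :=
    (((integrable_cexp_mul_gaussianReal Complex.I).const_mul ((a - b * μ : ℝ) : ℂ)).add
      ((integrable_mul_cexp_gaussianReal Complex.I).const_mul (b : ℂ))).congr
      (ae_of_all _ fun x ↦ by simp only [Pi.add_apply]; ring)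
  have hre := integral_re hintegrable
  simp only [RCLike.re_to_complex] at hre
  simp_rw [hpoint]
  rw [hre, integral_affine_mul_cexp_gaussianReal, hvalue]
  simp only [Complex.mul_re, Complex.mul_im, Complex.add_re, Complex.add_im, Complex.ofReal_re,
    Complex.ofReal_im, Complex.I_re, Complex.I_im]
  ring

lemma integral_mul_gaussianPDFReal (μ : ℝ) (hv : v ≠ 0) :
    ∫ x, gaussianPDFReal μ v x * x = μ := by
  simpa [integral_gaussianReal_eq_integral_smul hv] using integral_id_gaussianReal (μ := μ) (v := v)

end ProbabilityTheory

lemma dotProduct_inv_fin_two_mulVec_self (sx ρ sθ u w : ℝ) (hsθ : sθ ≠ 0)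
    (hdet : sx * sθ - ρ ^ 2 ≠ 0) :
    ![u, w] ⬝ᵥ (!![sx, ρ; ρ, sθ] : Matrix (Fin 2) (Fin 2) ℝ)⁻¹ *ᵥ ![u, w]
      = w ^ 2 / sθ + (u - ρ / sθ * w) ^ 2 / ((sx * sθ - ρ ^ 2) / sθ) := by
  rw [Matrix.inv_def, Matrix.det_fin_two_of, Matrix.adjugate_fin_two_of, Ring.inverse_eq_inv]
  simp only [smul_mulVec, mulVec_cons, mulVec_empty, dotProduct, Fin.sum_univ_two, Fin.isValue,
    cons_val_zero, cons_val_one, cons_val_fin_one, head_cons, tail_cons, Pi.smul_apply, Pi.add_apply,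
    Function.comp_apply, smul_eq_mul, add_zero]
  field_simp
  ring

lemma bivariateGaussianDensity_eq_gaussianPDFReal_mul (mx mθ ρ sx sθ x θ : ℝ) (hsθ : 0 < sθ)
    (hdet : 0 < sx * sθ - ρ ^ 2) :
    (2 * π * √(sx * sθ - ρ ^ 2))⁻¹ *
        rexp (-(1 / 2) *
          (![x - mx, θ - mθ] ⬝ᵥ (!![sx, ρ; ρ, sθ] : Matrix (Fin 2) (Fin 2) ℝ)⁻¹ *ᵥ
            ![x - mx, θ - mθ]))
      = gaussianPDFReal mθ sθ.toNNReal θ *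
          gaussianPDFReal (mx + ρ / sθ * (θ - mθ)) ((sx * sθ - ρ ^ 2) / sθ).toNNReal x := by
  rw [dotProduct_inv_fin_two_mulVec_self _ _ _ _ _ hsθ.ne' hdet.ne']
  generalize sx * sθ - ρ ^ 2 = d at *
  have hnorm : √(2 * π * sθ) * √(2 * π * (d / sθ)) = 2 * π * √d := by
    rw [← Real.sqrt_mul (by positivity), show 2 * π * sθ * (2 * π * (d / sθ)) = (2 * π) ^ 2 * d by
      field_simp, Real.sqrt_mul (by positivity), Real.sqrt_sq (by positivity)]
  rw [gaussianPDFReal, gaussianPDFReal, Real.coe_toNNReal _ hsθ.le,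
    Real.coe_toNNReal _ (by positivity), mul_mul_mul_comm, ← mul_inv, hnorm, ← Real.exp_add]
  congr 2
  field_simp
  ring

theorem integral_mul_cos_bivariate_gaussian_general
    (mx mθ ρ sx sθ : ℝ) (hsθ : 0 < sθ) (hdet : 0 < sx * sθ - ρ ^ 2)
    (p : ℝ → ℝ → ℝ)
    (hp : ∀ x θ : ℝ, p x θ =
      (2 * π * Real.sqrt (sx * sθ - ρ ^ 2))⁻¹ *
        Real.exp (-(1 / 2) *
          (![x - mx, θ - mθ] ⬝ᵥ (!![sx, ρ; ρ, sθ] : Matrix (Fin 2) (Fin 2) ℝ)⁻¹.mulVec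
            ![x - mx, θ - mθ]))) :
    ∫ θ : ℝ, ∫ x : ℝ, x * Real.cos θ * p x θ =
      Real.exp (-sθ / 2) * (mx * Real.cos mθ - ρ * Real.sin mθ) := by
  have hvar : sθ.toNNReal ≠ 0 := (Real.toNNReal_pos.mpr hsθ).ne'
  have hcondVar : ((sx * sθ - ρ ^ 2) / sθ).toNNReal ≠ 0 :=
    (Real.toNNReal_pos.mpr (by positivity)).ne'
  have hinner (θ : ℝ) : ∫ x, x * Real.cos θ * p x θ
      = gaussianPDFReal mθ sθ.toNNReal θ * ((mx + ρ / sθ * (θ - mθ)) * Real.cos θ) := by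
    simp_rw [hp, bivariateGaussianDensity_eq_gaussianPDFReal_mul _ _ _ _ _ _ _ hsθ hdet]
    calc _ = Real.cos θ * gaussianPDFReal mθ sθ.toNNReal θ * ∫ x,
          gaussianPDFReal (mx + ρ / sθ * (θ - mθ)) ((sx * sθ - ρ ^ 2) / sθ).toNNReal x * x := by
          rw [← integral_const_mul]
          congr with x
          ring
      _ = _ := by
          rw [integral_mul_gaussianPDFReal _ hcondVar]
          ring
  calc ∫ θ, ∫ x, x * Real.cos θ * p x θ
      = ∫ θ, (mx + ρ / sθ * (θ - mθ)) * Real.cos θ ∂gaussianReal mθ sθ.toNNReal := by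
        simp_rw [hinner, integral_gaussianReal_eq_integral_smul hvar, smul_eq_mul]
    _ = Real.exp (-sθ / 2) * (mx * Real.cos mθ - ρ / sθ * sθ * Real.sin mθ) := by
        rw [integral_affine_mul_cos_gaussianReal, Real.coe_toNNReal _ hsθ.le]
    _ = Real.exp (-sθ / 2) * (mx * Real.cos mθ - ρ * Real.sin mθ) := by
        rw [div_mul_cancel₀ _ hsθ.ne']

theorem integral_mul_cos_bivariate_gaussian
    (mx mθ ρ sx sθ : ℝ) (hsx : 0 < sx) (hsθ : 0 < sθ) (hdet : 0 < sx * sθ - ρ ^ 2)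
    (p : ℝ → ℝ → ℝ)
    (hp : ∀ x θ : ℝ, p x θ =
      (2 * π * Real.sqrt (sx * sθ - ρ ^ 2))⁻¹ *
        Real.exp (-(1 / 2) *
          (![x - mx, θ - mθ] ⬝ᵥ (!![sx, ρ; ρ, sθ] : Matrix (Fin 2) (Fin 2) ℝ)⁻¹.mulVec
            ![x - mx, θ - mθ]))) :
    ∫ θ : ℝ, ∫ x : ℝ, x * Real.cos θ * p x θ =
      Real.exp (-sθ / 2) * (mx * Real.cos mθ - ρ * Real.sin mθ) :=
  integral_mul_cos_bivariate_gaussian_general mx mθ ρ sx sθ hsθ hdet p hp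
end
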